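/- Consider the 5-simplex on vertices {1,...,6} and the Pachner move 2–4 configurations: the left side consists of the two pentachora L = {12345, 12346} with interior tetrahedron 1234, the right side of the four pentachora R = {12356, 12456, 13456, 23456} with interior tetrahedra {1256, 1356, 1456, 2356, 2456, 3456}, and the common boundary tetrahedra are B = {2345, 1345, 1245, 1235, 2346, 1346, 1246, 1236}. A permitted ℤ-coloring of a side is an assignment (x_t, y_t) ∈ ℤ × ℤ to every tetrahedron t that is a face of its pentachora, such that 𝐲_u = ℛ𝐱_u for each pentachoron u of that side. Then the restriction to B of permitted colorings of the left side is injective, its image equals the image of the restriction to B of permitted colorings of the right side, and for each boundary value in this image the set of permitted colorings of the right side restricting to it is in bijection with ℤ (one additional ℤ-degree of freedom). -/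

import Mathlib

/- The Pachner move 2–4 inside the 5-simplex with vertex set `Fin 6`
   (vertices 1,…,6 of the paper are 0,…,5 here). -/

/-- The matrix ℛ from the paper. -/
def Rmat : Matrix (Fin 5) (Fin 5) ℤ :=
  !![0, -2, 1, 1, -2;
     0, -1, 0, 1, -1;
     -1, 2, -2, 0, 1;
     -1, 3, -2, -1, 2;
     0, 1, -1, 0, 0]

/-- The five tetrahedral faces `jklm, iklm, ijlm, ijkm, ijkl` of the
pentachoron `ijklm = abcde`. -/
def pentFaces (a b c d e : Fin 6) : Fin 5 → Finset (Fin 6) :=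
  ![{b, c, d, e}, {a, c, d, e}, {a, b, d, e}, {a, b, c, e}, {a, b, c, d}]

/-- A ℤ-coloring `t ↦ (x_t, y_t)` is permitted on the pentachoron `abcde`
iff `𝐲_u = ℛ 𝐱_u`, where ℛ acts with integer coefficients. -/
def IsPermitted (f : Finset (Fin 6) → ℤ × ℤ) (a b c d e : Fin 6) : Prop :=
  ∀ i : Fin 5,
    (f (pentFaces a b c d e i)).2 =
      ∑ j : Fin 5, Rmat i j * (f (pentFaces a b c d e j)).1

/-- Permitted coloring of the left side of the move 2–4: the pentachora
`12345, 12346`. -/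
def PermittedLeft (f : Finset (Fin 6) → ℤ × ℤ) : Prop :=
  IsPermitted f 0 1 2 3 4 ∧ IsPermitted f 0 1 2 3 5

/-- Permitted coloring of the right side of the move 2–4: the pentachora
`12356, 12456, 13456, 23456`. -/
def PermittedRight (f : Finset (Fin 6) → ℤ × ℤ) : Prop :=
  IsPermitted f 0 1 2 4 5 ∧ IsPermitted f 0 1 3 4 5 ∧
    IsPermitted f 0 2 3 4 5 ∧ IsPermitted f 1 2 3 4 5

/-- The common boundary tetrahedra
`B = {2345, 1345, 1245, 1235, 2346, 1346, 1246, 1236}`. -/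
def Bdry : Finset (Finset (Fin 6)) :=
  {{1, 2, 3, 4}, {0, 2, 3, 4}, {0, 1, 3, 4}, {0, 1, 2, 4},
   {1, 2, 3, 5}, {0, 2, 3, 5}, {0, 1, 3, 5}, {0, 1, 2, 5}}

/-- The tetrahedra that are faces of the left-side pentachora: the boundary
ones together with the interior tetrahedron `1234`. -/
def FacesLeft : Finset (Finset (Fin 6)) :=
  Bdry ∪ {{0, 1, 2, 3}}

/-- The tetrahedra that are faces of the right-side pentachora: the boundary
ones together with the interior tetrahedra `1256, 1356, 1456, 2356, 2456, 3456`. -/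
def FacesRight : Finset (Finset (Fin 6)) :=
  Bdry ∪ {{0, 1, 4, 5}, {0, 2, 4, 5}, {0, 3, 4, 5},
          {1, 2, 4, 5}, {1, 3, 4, 5}, {2, 3, 4, 5}}

/-- The set of permitted colorings of the right side (an assignment to every
tetrahedron that is a face of the right-side pentachora, encoded as a function
vanishing outside `FacesRight`) whose restriction to the boundary `B` is `b`. -/
def RightFiber (b : Finset (Fin 6) → ℤ × ℤ) : Set (Finset (Fin 6) → ℤ × ℤ) :=
  {f | (∀ t ∉ FacesRight, f t = 0) ∧ PermittedRight f ∧ ∀ t ∈ Bdry, f t = b t}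

/-! Solving `𝐲 = ℛ𝐱` on a pentachoron `abcde` for its last face shows that the colour of `abcd`
is forced by the other four faces, which must in turn satisfy three linear relations
(`IsFillable`). The two left pentachora share only `0123`, so a boundary colouring extends to
the left side iff both pentachora are fillable and force the same colour on `0123`
(`BoundaryCompatible`), and then the extension is unique. On the right side, once the
`x`-value `p` of the interior tetrahedron `0345` is chosen, the pentachora `01345`, `02345` and
the remaining equations force every interior colour, and all twenty equations hold exactly when
the boundary colouring is compatible; so the right fibre is parametrised by `p ∈ ℤ`. -/

theorem isPermitted_iff (f : Finset (Fin 6) → ℤ × ℤ) (a b c d e : Fin 6) :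
    IsPermitted f a b c d e ↔
      (f {b, c, d, e}).2 = -2 * (f {a, c, d, e}).1 + (f {a, b, d, e}).1 + (f {a, b, c, e}).1
          - 2 * (f {a, b, c, d}).1 ∧
      (f {a, c, d, e}).2 = -(f {a, c, d, e}).1 + (f {a, b, c, e}).1 - (f {a, b, c, d}).1 ∧
      (f {a, b, d, e}).2 = -(f {b, c, d, e}).1 + 2 * (f {a, c, d, e}).1 - 2 * (f {a, b, d, e}).1
          + (f {a, b, c, d}).1 ∧
      (f {a, b, c, e}).2 = -(f {b, c, d, e}).1 + 3 * (f {a, c, d, e}).1 - 2 * (f {a, b, d, e}).1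
          - (f {a, b, c, e}).1 + 2 * (f {a, b, c, d}).1 ∧
      (f {a, b, c, d}).2 = (f {a, c, d, e}).1 - (f {a, b, d, e}).1 := by
  simp [IsPermitted, Fin.forall_fin_succ, Fin.sum_univ_five, pentFaces, Rmat, sub_eq_add_neg]

def IsFillable (f : Finset (Fin 6) → ℤ × ℤ) (a b c d e : Fin 6) : Prop :=
  (f {b, c, d, e}).2 = (f {a, b, d, e}).1 - (f {a, b, c, e}).1 + 2 * (f {a, c, d, e}).2 ∧
  (f {a, b, d, e}).2 = -(f {b, c, d, e}).1 + (f {a, c, d, e}).1 - 2 * (f {a, b, d, e}).1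
      + (f {a, b, c, e}).1 - (f {a, c, d, e}).2 ∧
  (f {a, b, c, e}).2 = (f {a, b, d, e}).2 - (f {a, c, d, e}).2

def lastFaceColor (f : Finset (Fin 6) → ℤ × ℤ) (a b c d e : Fin 6) : ℤ × ℤ :=
  (-(f {a, c, d, e}).1 + (f {a, b, c, e}).1 - (f {a, c, d, e}).2,
    (f {a, c, d, e}).1 - (f {a, b, d, e}).1)

theorem isPermitted_iff_isFillable (f : Finset (Fin 6) → ℤ × ℤ) (a b c d e : Fin 6) :
    IsPermitted f a b c d e ↔
      IsFillable f a b c d e ∧ f {a, b, c, d} = lastFaceColor f a b c d e := by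
  rw [isPermitted_iff, IsFillable, lastFaceColor, Prod.ext_iff]
  constructor
  · rintro ⟨h₀, h₁, h₂, h₃, h₄⟩
    refine ⟨⟨?_, ?_, ?_⟩, ?_, ?_⟩ <;> linarith
  · rintro ⟨⟨h₀, h₂, h₃⟩, hx, hy⟩
    refine ⟨?_, ?_, ?_, ?_, ?_⟩ <;> linarith

def BoundaryCompatible (b : Finset (Fin 6) → ℤ × ℤ) : Prop :=
  IsFillable b 0 1 2 3 4 ∧ IsFillable b 0 1 2 3 5 ∧
    lastFaceColor b 0 1 2 3 4 = lastFaceColor b 0 1 2 3 5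

theorem forall_mem_bdry_iff {p : Finset (Fin 6) → Prop} :
    (∀ t ∈ Bdry, p t) ↔ p {1, 2, 3, 4} ∧ p {0, 2, 3, 4} ∧ p {0, 1, 3, 4} ∧ p {0, 1, 2, 4} ∧
      p {1, 2, 3, 5} ∧ p {0, 2, 3, 5} ∧ p {0, 1, 3, 5} ∧ p {0, 1, 2, 5} := by
  simp [Bdry]

theorem boundaryCompatible_congr {f g : Finset (Fin 6) → ℤ × ℤ} (h : ∀ t ∈ Bdry, f t = g t) :
    BoundaryCompatible f ↔ BoundaryCompatible g := by
  obtain ⟨h₁, h₂, h₃, h₄, h₅, h₆, h₇, h₈⟩ := forall_mem_bdry_iff.1 h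
  simp only [BoundaryCompatible, IsFillable, lastFaceColor, h₁, h₂, h₃, h₄, h₅, h₆, h₇, h₈]

theorem permittedLeft_iff (f : Finset (Fin 6) → ℤ × ℤ) :
    PermittedLeft f ↔ BoundaryCompatible f ∧ f {0, 1, 2, 3} = lastFaceColor f 0 1 2 3 4 := by
  rw [PermittedLeft, BoundaryCompatible, isPermitted_iff_isFillable, isPermitted_iff_isFillable]
  constructor
  · rintro ⟨⟨h₄, hl₄⟩, h₅, hl₅⟩
    exact ⟨⟨h₄, h₅, hl₄.symm.trans hl₅⟩, hl₄⟩
  · rintro ⟨⟨h₄, h₅, hl⟩, hl₄⟩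
    exact ⟨⟨h₄, hl₄⟩, h₅, hl₄.trans hl⟩

theorem eqOn_facesLeft_of_permittedLeft {f g : Finset (Fin 6) → ℤ × ℤ} (hf : PermittedLeft f)
    (hg : PermittedLeft g) (h : ∀ t ∈ Bdry, f t = g t) : ∀ t ∈ FacesLeft, f t = g t := by
  intro t ht
  rcases Finset.mem_union.1 ht with ht | ht
  · exact h t ht
  · obtain ⟨-, h₂, h₃, h₄, -⟩ := forall_mem_bdry_iff.1 h
    rw [Finset.mem_singleton.1 ht, ((permittedLeft_iff f).1 hf).2, ((permittedLeft_iff g).1 hg).2]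
    simp only [lastFaceColor, h₂, h₃, h₄]

def leftExtension (b : Finset (Fin 6) → ℤ × ℤ) : Finset (Fin 6) → ℤ × ℤ :=
  Function.update b {0, 1, 2, 3} (lastFaceColor b 0 1 2 3 4)

theorem leftExtension_apply_of_mem_bdry (b : Finset (Fin 6) → ℤ × ℤ) {t : Finset (Fin 6)}
    (ht : t ∈ Bdry) : leftExtension b t = b t :=
  Function.update_of_ne (by rintro rfl; exact absurd ht (by decide)) _ _

theorem permittedLeft_leftExtension {b : Finset (Fin 6) → ℤ × ℤ} (h : BoundaryCompatible b) :
    PermittedLeft (leftExtension b) := by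
  refine (permittedLeft_iff _).2 ⟨?_, ?_⟩
  · exact (boundaryCompatible_congr fun t => leftExtension_apply_of_mem_bdry b).2 h
  · simp +decide [leftExtension, lastFaceColor]

theorem exists_permittedLeft_iff (b : Finset (Fin 6) → ℤ × ℤ) :
    (∃ f, PermittedLeft f ∧ ∀ t ∈ Bdry, f t = b t) ↔ BoundaryCompatible b := by
  constructor
  · rintro ⟨f, hf, hfb⟩
    exact (boundaryCompatible_congr hfb).1 ((permittedLeft_iff f).1 hf).1
  · exact fun h => ⟨leftExtension b, permittedLeft_leftExtension h,
      fun t => leftExtension_apply_of_mem_bdry b⟩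

-- `p` is the `x`-value of `0345`; the rows for `0145`, `1345` (resp. `0245`, `2345`) solve
-- `𝐲 = ℛ𝐱` on `01345` (resp. `02345`), the one for `1245` the whole right-hand system.
def rightExtension (b : Finset (Fin 6) → ℤ × ℤ) (p : ℤ) (t : Finset (Fin 6)) : ℤ × ℤ :=
  if t ∈ Bdry then b t
  else if t = {0, 3, 4, 5} then (p, -p + (b {0, 1, 3, 5}).1 - (b {0, 1, 3, 4}).1)
  else if t = {0, 1, 4, 5} then
    (p - (b {0, 1, 3, 4}).2, -p + (b {0, 1, 3, 5}).1 - (b {0, 1, 3, 4}).1 + (b {0, 1, 3, 5}).2)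
  else if t = {1, 3, 4, 5} then
    (p + 2 * (b {0, 1, 3, 4}).2 - (b {0, 1, 3, 5}).1 + 2 * (b {0, 1, 3, 4}).1 - (b {0, 1, 3, 5}).2,
      -p - (b {0, 1, 3, 4}).2 + (b {0, 1, 3, 5}).1 - 2 * (b {0, 1, 3, 4}).1)
  else if t = {0, 2, 4, 5} then
    (p - (b {0, 2, 3, 4}).2, -p + (b {0, 2, 3, 5}).1 - (b {0, 2, 3, 4}).1 + (b {0, 2, 3, 5}).2)
  else if t = {2, 3, 4, 5} then
    (p + 2 * (b {0, 2, 3, 4}).2 - (b {0, 2, 3, 5}).1 + 2 * (b {0, 2, 3, 4}).1 - (b {0, 2, 3, 5}).2,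
      -p - (b {0, 2, 3, 4}).2 + (b {0, 2, 3, 5}).1 - 2 * (b {0, 2, 3, 4}).1)
  else if t = {1, 2, 4, 5} then
    (p + (b {0, 1, 2, 4}).1 + 2 * (b {0, 1, 2, 4}).2 + (b {0, 1, 3, 4}).1 - (b {0, 1, 3, 5}).1
        - (b {0, 1, 3, 5}).2,
      -p - (b {0, 1, 2, 4}).1 - (b {0, 1, 2, 4}).2 - (b {0, 1, 3, 4}).1 + (b {0, 1, 3, 5}).1
        + (b {0, 1, 3, 5}).2 - (b {0, 1, 2, 5}).2)
  else 0

theorem rightExtension_apply_of_mem_bdry (b : Finset (Fin 6) → ℤ × ℤ) (p : ℤ)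
    {t : Finset (Fin 6)} (ht : t ∈ Bdry) : rightExtension b p t = b t :=
  if_pos ht

theorem rightExtension_apply_of_notMem_facesRight (b : Finset (Fin 6) → ℤ × ℤ) (p : ℤ)
    {t : Finset (Fin 6)} (ht : t ∉ FacesRight) : rightExtension b p t = 0 := by
  simp only [FacesRight, Finset.mem_union, Finset.mem_insert, Finset.mem_singleton, not_or] at ht
  obtain ⟨hB, h₁, h₂, h₃, h₄, h₅, h₆⟩ := ht
  simp only [rightExtension, if_neg hB, if_neg h₁, if_neg h₂, if_neg h₃, if_neg h₄, if_neg h₅,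
    if_neg h₆]

theorem rightExtension_0345_fst (b : Finset (Fin 6) → ℤ × ℤ) (p : ℤ) :
    (rightExtension b p {0, 3, 4, 5}).1 = p := by
  simp +decide [rightExtension]

theorem rightExtension_congr {f b : Finset (Fin 6) → ℤ × ℤ} (h : ∀ t ∈ Bdry, f t = b t) (p : ℤ) :
    rightExtension f p = rightExtension b p := by
  obtain ⟨-, h₂, h₃, h₄, -, h₆, h₇, h₈⟩ := forall_mem_bdry_iff.1 h
  funext t
  simp only [rightExtension, h₂, h₃, h₄, h₆, h₇, h₈]
  split_ifs with ht
  · exact h t ht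
  all_goals rfl

theorem permittedRight_rightExtension {b : Finset (Fin 6) → ℤ × ℤ} (h : BoundaryCompatible b)
    (p : ℤ) : PermittedRight (rightExtension b p) := by
  obtain ⟨⟨h₁, h₂, h₃⟩, ⟨h₄, h₅, h₆⟩, hl⟩ := h
  simp only [lastFaceColor, Prod.ext_iff] at hl
  simp only [PermittedRight, isPermitted_iff]
  refine ⟨⟨?_, ?_, ?_, ?_, ?_⟩, ⟨?_, ?_, ?_, ?_, ?_⟩, ⟨?_, ?_, ?_, ?_, ?_⟩, ⟨?_, ?_, ?_, ?_, ?_⟩⟩ <;>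
    simp +decide only [rightExtension, if_true, if_false] <;> linarith

theorem PermittedRight.boundaryCompatible {f : Finset (Fin 6) → ℤ × ℤ} (hf : PermittedRight f) :
    BoundaryCompatible f := by
  simp only [PermittedRight, isPermitted_iff] at hf
  obtain ⟨⟨h₁, h₂, h₃, h₄, h₅⟩, ⟨h₆, h₇, h₈, h₉, h₁₀⟩, ⟨h₁₁, h₁₂, h₁₃, h₁₄, h₁₅⟩,
    ⟨h₁₆, h₁₇, h₁₈, h₁₉, h₂₀⟩⟩ := hf
  simp only [BoundaryCompatible, IsFillable, lastFaceColor, Prod.ext_iff]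
  refine ⟨⟨?_, ?_, ?_⟩, ⟨?_, ?_, ?_⟩, ?_, ?_⟩ <;> linarith

theorem PermittedRight.eq_rightExtension {f : Finset (Fin 6) → ℤ × ℤ} (hf : PermittedRight f)
    (h₀ : ∀ t ∉ FacesRight, f t = 0) : f = rightExtension f (f {0, 3, 4, 5}).1 := by
  funext t
  by_cases hB : t ∈ Bdry
  · exact (rightExtension_apply_of_mem_bdry f _ hB).symm
  by_cases hR : t ∈ FacesRight
  swap
  · rw [h₀ t hR, rightExtension_apply_of_notMem_facesRight f _ hR]
  simp only [PermittedRight, isPermitted_iff] at hf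
  obtain ⟨⟨h₁, h₂, h₃, h₄, h₅⟩, ⟨h₆, h₇, h₈, h₉, h₁₀⟩, ⟨h₁₁, h₁₂, h₁₃, h₁₄, h₁₅⟩,
    ⟨h₁₆, h₁₇, h₁₈, h₁₉, h₂₀⟩⟩ := hf
  simp only [FacesRight, Finset.mem_union, hB, false_or, Finset.mem_insert,
    Finset.mem_singleton] at hR
  rcases hR with rfl | rfl | rfl | rfl | rfl | rfl <;>
    refine Prod.ext ?_ ?_ <;> simp +decide only [rightExtension, if_true, if_false] <;> linarith

theorem exists_permittedRight_iff (b : Finset (Fin 6) → ℤ × ℤ) :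
    (∃ f, PermittedRight f ∧ ∀ t ∈ Bdry, f t = b t) ↔ BoundaryCompatible b := by
  constructor
  · rintro ⟨f, hf, hfb⟩
    exact (boundaryCompatible_congr hfb).1 hf.boundaryCompatible
  · exact fun h => ⟨rightExtension b 0, permittedRight_rightExtension h 0,
      fun t => rightExtension_apply_of_mem_bdry b 0⟩

def rightFiberEquiv {b : Finset (Fin 6) → ℤ × ℤ} (h : BoundaryCompatible b) :
    RightFiber b ≃ ℤ where
  toFun f := (f.1 {0, 3, 4, 5}).1
  invFun p := ⟨rightExtension b p, fun t => rightExtension_apply_of_notMem_facesRight b p,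
    permittedRight_rightExtension h p, fun t => rightExtension_apply_of_mem_bdry b p⟩
  left_inv := by
    rintro ⟨f, hf₀, hf, hfb⟩
    ext1
    exact ((hf.eq_rightExtension hf₀).trans (rightExtension_congr hfb _)).symm
  right_inv := rightExtension_0345_fst b

/-- For the Pachner move 2–4: restriction to the boundary `B` is injective on
permitted colorings of the left side; its image equals the image of the
restriction to `B` of permitted colorings of the right side; and for each
boundary value in this image, the set of permitted colorings of the right side
restricting to it is in bijection with ℤ (one additional ℤ-degree of freedom). -/
theorem pachner_two_four :
    (∀ f g : Finset (Fin 6) → ℤ × ℤ, PermittedLeft f → PermittedLeft g →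
      (∀ t ∈ Bdry, f t = g t) → ∀ t ∈ FacesLeft, f t = g t) ∧
    (∀ b : Finset (Fin 6) → ℤ × ℤ,
      (∃ f, PermittedLeft f ∧ ∀ t ∈ Bdry, f t = b t) ↔
      (∃ f, PermittedRight f ∧ ∀ t ∈ Bdry, f t = b t)) ∧
    (∀ b : Finset (Fin 6) → ℤ × ℤ,
      (∃ f, PermittedLeft f ∧ ∀ t ∈ Bdry, f t = b t) →
      Nonempty (RightFiber b ≃ ℤ)) :=
  ⟨fun _ _ => eqOn_facesLeft_of_permittedLeft,
    fun b => (exists_permittedLeft_iff b).trans (exists_permittedRight_iff b).symm,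
    fun b hb => ⟨rightFiberEquiv ((exists_permittedLeft_iff b).1 hb)⟩⟩
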